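/- Let U be a 2×2 unitary complex matrix whose off-diagonal entry satisfies |U₁₂| < 1, and let θ ∈ (−π/2, π/2) with θ ≠ 0. Then both off-diagonal entries of the Reichardt iterates U_k tend to 0 as k → ∞; that is, the sequence U_k converges to a diagonal gate. -/

import Mathlib

open Complex Matrix

/-- The z-rotation `D(θ) = diag(e^{iθ/2}, e^{-iθ/2})`. -/
noncomputable def Dmat (θ : ℝ) : Matrix (Fin 2) (Fin 2) ℂ :=
  !![Complex.exp (Complex.I * θ / 2), 0; 0, Complex.exp (-(Complex.I * θ / 2))]

/-- The Reichardt iteration `U₀ = U`, `U_{k+1} = U_k D(θ) U_k⁻¹ D(θ) U_k D(θ)⁻²`. -/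
noncomputable def reichardt (θ : ℝ) (U : Matrix (Fin 2) (Fin 2) ℂ) :
    ℕ → Matrix (Fin 2) (Fin 2) ℂ
  | 0 => U
  | k + 1 =>
      reichardt θ U k * Dmat θ * (reichardt θ U k)⁻¹ * Dmat θ * reichardt θ U k *
        (Dmat θ ^ 2)⁻¹

/-!
For a unitary `W` with off-diagonal entry `b`, a direct computation using only the unitarity
relations gives
`(W D W⁻¹ D W D⁻²)₀₁ = b e^{iθ} ((1 - |b|²)(2 cos θ - 1) + |b|²)`.
When `0 < cos θ < 1` the real factor lies in `[2 cos θ - 1, 1)` and increases with `|b|²`, so as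
long as `|b| ≤ |U₀₁| < 1` its absolute value is at most a fixed `r < 1`. Hence `|(U_k)₀₁|`
decays geometrically, and `|(U_k)₁₀| = |(U_k)₀₁|` because every `U_k` is unitary.
-/

open ComplexConjugate Filter Topology

namespace Matrix

lemma inv_eq_star_of_mem_unitaryGroup {n α : Type*} [Fintype n] [DecidableEq n] [CommRing α]
    [StarRing α] {W : Matrix n n α} (hW : W ∈ unitaryGroup n α) : W⁻¹ = star W :=
  inv_eq_left_inv (mem_unitaryGroup_iff'.mp hW)

variable {W : Matrix (Fin 2) (Fin 2) ℂ}

lemma norm_apply_one_zero_eq_of_mem_unitaryGroup (hW : W ∈ unitaryGroup (Fin 2) ℂ) :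
    ‖W 1 0‖ = ‖W 0 1‖ := by
  have hrow := congrFun₂ (mem_unitaryGroup_iff.mp hW) 0 0
  have hcol := congrFun₂ (mem_unitaryGroup_iff'.mp hW) 0 0
  simp only [mul_apply, Fin.sum_univ_two, star_apply, one_apply_eq, RCLike.star_def] at hrow hcol
  rw [mul_conj', mul_conj'] at hrow
  rw [mul_comm, mul_conj', mul_comm, mul_conj'] at hcol
  have hsq : ‖W 1 0‖ ^ 2 = ‖W 0 1‖ ^ 2 := by exact_mod_cast add_left_cancel (hcol.trans hrow.symm)
  exact (sq_eq_sq₀ (norm_nonneg _) (norm_nonneg _)).mp hsq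

lemma inv_sq_of_mul_eq_one {x y : ℂ} (hxy : x * y = 1) :
    (!![x, 0; 0, y] ^ 2)⁻¹ = !![y ^ 2, 0; 0, x ^ 2] := by
  refine inv_eq_right_inv ?_
  ext i j
  fin_cases i <;> fin_cases j <;> simp [sq, mul_apply] <;> linear_combination (x * y + 1) * hxy

lemma unitary_mul_diag_mul_star_apply_zero_one (hW : W ∈ unitaryGroup (Fin 2) ℂ) {x y : ℂ}
    (hxy : x * y = 1) :
    (W * !![x, 0; 0, y] * star W * !![x, 0; 0, y] * W * !![y ^ 2, 0; 0, x ^ 2]) 0 1 =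
      W 0 1 * x ^ 2 * ((1 - (‖W 0 1‖ : ℂ) ^ 2) * (x ^ 2 + y ^ 2 - 1) + (‖W 0 1‖ : ℂ) ^ 2) := by
  have hrow := congrFun₂ (mem_unitaryGroup_iff.mp hW)
  have hcol := congrFun₂ (mem_unitaryGroup_iff'.mp hW)
  have h00 := hrow 0 0
  have h01 := hrow 0 1
  have h11 := hcol 1 1
  simp only [star_eq_conjTranspose, Fin.isValue, mul_apply, conjTranspose_apply,
    RCLike.star_def, Fin.sum_univ_two, one_apply_eq, ne_eq, zero_ne_one, not_false_eq_true,
    one_apply_ne, of_apply, cons_val', cons_val_fin_one, cons_val_zero, cons_val_one, mul_zero,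
    add_zero, zero_add] at h00 h01 h11 ⊢
  rw [← mul_conj']
  linear_combination x ^ 2 * (x ^ 2 * W 0 1 * h00 + (y ^ 2 - 1) * W 0 1 * h11 +
    (W 0 1 * W 0 1 * conj (W 0 1) + W 0 0 * conj (W 1 0) * W 1 1) * hxy + W 1 1 * h01)

end Matrix

lemma Dmat_mem_unitaryGroup (θ : ℝ) : Dmat θ ∈ unitaryGroup (Fin 2) ℂ := by
  rw [mem_unitaryGroup_iff']
  ext i j
  fin_cases i <;> fin_cases j <;>
    simp [Dmat, mul_apply, ← exp_conj, ← exp_add, map_div₀, map_ofNat, neg_div]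

noncomputable def reichardtStep (θ : ℝ) (W : Matrix (Fin 2) (Fin 2) ℂ) : Matrix (Fin 2) (Fin 2) ℂ :=
  W * Dmat θ * W⁻¹ * Dmat θ * W * (Dmat θ ^ 2)⁻¹

lemma reichardt_succ (θ : ℝ) (U : Matrix (Fin 2) (Fin 2) ℂ) (k : ℕ) :
    reichardt θ U (k + 1) = reichardtStep θ (reichardt θ U k) := rfl

lemma reichardtStep_mem_unitaryGroup (θ : ℝ) {W : Matrix (Fin 2) (Fin 2) ℂ}
    (hW : W ∈ unitaryGroup (Fin 2) ℂ) : reichardtStep θ W ∈ unitaryGroup (Fin 2) ℂ := by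
  have hD := Dmat_mem_unitaryGroup θ
  have hD2 := pow_mem hD 2
  rw [reichardtStep, inv_eq_star_of_mem_unitaryGroup hW, inv_eq_star_of_mem_unitaryGroup hD2]
  exact mul_mem (mul_mem (mul_mem (mul_mem (mul_mem hW hD) (Unitary.star_mem hW)) hD) hW)
    (Unitary.star_mem hD2)

lemma reichardt_mem_unitaryGroup (θ : ℝ) {U : Matrix (Fin 2) (Fin 2) ℂ}
    (hU : U ∈ unitaryGroup (Fin 2) ℂ) (k : ℕ) : reichardt θ U k ∈ unitaryGroup (Fin 2) ℂ := by
  induction k with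
  | zero => exact hU
  | succ k ih => exact reichardtStep_mem_unitaryGroup θ ih

def reichardtFactor (c p : ℝ) : ℝ := (1 - p) * (2 * c - 1) + p

lemma norm_reichardtStep_apply_zero_one (θ : ℝ) {W : Matrix (Fin 2) (Fin 2) ℂ}
    (hW : W ∈ unitaryGroup (Fin 2) ℂ) :
    ‖reichardtStep θ W 0 1‖ = ‖W 0 1‖ * |reichardtFactor (Real.cos θ) (‖W 0 1‖ ^ 2)| := by
  set x := exp (I * θ / 2)
  set y := exp (-(I * θ / 2))
  have hxy : x * y = 1 := by rw [← exp_add, add_neg_cancel, exp_zero]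
  have hx : x ^ 2 = exp (I * θ) := by rw [← exp_nat_mul]; ring_nf
  have hsum : x ^ 2 + y ^ 2 = 2 * Real.cos θ := by
    rw [hx, ← exp_nat_mul, ofReal_cos, two_cos]; ring_nf
  rw [reichardtStep, inv_eq_star_of_mem_unitaryGroup hW, Dmat, inv_sq_of_mul_eq_one hxy,
    unitary_mul_diag_mul_star_apply_zero_one hW hxy, hsum, hx, norm_mul, norm_mul,
    norm_exp_I_mul_ofReal, mul_one, reichardtFactor, ← Real.norm_eq_abs, ← norm_real]
  push_cast
  ring_nf

lemma exists_abs_reichardtFactor_le {c p₀ : ℝ} (hc0 : 0 < c) (hc1 : c < 1) (hp₀ : p₀ < 1) :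
    ∃ r ∈ Set.Ico (0 : ℝ) 1, ∀ p ∈ Set.Icc 0 p₀, |reichardtFactor c p| ≤ r := by
  refine ⟨max |2 * c - 1| (reichardtFactor c p₀), ⟨le_max_of_le_left (abs_nonneg _), ?_⟩, ?_⟩
  · refine max_lt (abs_lt.mpr ⟨by linarith, by linarith⟩) ?_
    unfold reichardtFactor
    nlinarith
  · rintro p ⟨hp0, hp⟩
    have hlow : 2 * c - 1 ≤ reichardtFactor c p := by unfold reichardtFactor; nlinarith
    have hmono : reichardtFactor c p ≤ reichardtFactor c p₀ := by
      unfold reichardtFactor; nlinarith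
    rw [abs_le]
    constructor
    · linarith [neg_abs_le (2 * c - 1), le_max_left |2 * c - 1| (reichardtFactor c p₀)]
    · exact hmono.trans (le_max_right _ _)

lemma tendsto_reichardt_apply_zero_one {θ : ℝ} (hc0 : 0 < Real.cos θ) (hc1 : Real.cos θ < 1)
    {U : Matrix (Fin 2) (Fin 2) ℂ} (hU : U ∈ unitaryGroup (Fin 2) ℂ) (hoff : ‖U 0 1‖ < 1) :
    Tendsto (fun k => reichardt θ U k 0 1) atTop (𝓝 0) := by
  set s : ℕ → ℝ := fun k => ‖reichardt θ U k 0 1‖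
  obtain ⟨r, ⟨hr0, hr1⟩, hr⟩ := exists_abs_reichardtFactor_le hc0 hc1
    (pow_lt_one₀ (norm_nonneg _) hoff two_ne_zero)
  have hstep : ∀ k, s k ≤ s 0 → s (k + 1) ≤ r * s k := fun k hk => by
    simp only [s, reichardt_succ, norm_reichardtStep_apply_zero_one θ
      (reichardt_mem_unitaryGroup θ hU k)]
    rw [mul_comm r]
    exact mul_le_mul_of_nonneg_left
      (hr _ ⟨sq_nonneg _, pow_le_pow_left₀ (norm_nonneg _) hk 2⟩) (norm_nonneg _)
  have hbound : ∀ k, s k ≤ s 0 := by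
    intro k
    induction k with
    | zero => rfl
    | succ k ih =>
      calc s (k + 1) ≤ r * s k := hstep k ih
        _ ≤ s k := mul_le_of_le_one_left (norm_nonneg _) hr1.le
        _ ≤ s 0 := ih
  rw [tendsto_zero_iff_norm_tendsto_zero]
  refine squeeze_zero (fun k => norm_nonneg _)
    (fun k => le_geom hr0 k fun j _ => hstep j (hbound j)) ?_
  simpa using (tendsto_pow_atTop_nhds_zero_of_lt_one hr0 hr1).mul_const (s 0)

/-- For a `2×2` unitary `U` with `|U₁₂| < 1` and `θ ∈ (-π/2, π/2)`, `θ ≠ 0`, both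
off-diagonal entries of the Reichardt iterates converge to `0`: the sequence converges to a
diagonal gate. -/
theorem reichardt_tendsto_diagonal (θ : ℝ)
    (hθ : θ ∈ Set.Ioo (-(Real.pi / 2)) (Real.pi / 2)) (hθ0 : θ ≠ 0)
    (U : Matrix (Fin 2) (Fin 2) ℂ) (hU : Uᴴ * U = 1)
    (hoff : ‖U 0 1‖ < 1) :
    Filter.Tendsto (fun k => reichardt θ U k 0 1) Filter.atTop (nhds 0) ∧
    Filter.Tendsto (fun k => reichardt θ U k 1 0) Filter.atTop (nhds 0) := by
  have hU' : U ∈ unitaryGroup (Fin 2) ℂ := mem_unitaryGroup_iff'.mpr hU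
  have hc0 : 0 < Real.cos θ := Real.cos_pos_of_mem_Ioo hθ
  have hc1 : Real.cos θ < 1 := (Real.cos_le_one θ).lt_of_ne fun h => hθ0 <|
    (Real.cos_eq_one_iff_of_lt_of_lt (by linarith [hθ.1, Real.pi_pos])
      (by linarith [hθ.2, Real.pi_pos])).mp h
  have h01 := tendsto_reichardt_apply_zero_one hc0 hc1 hU' hoff
  refine ⟨h01, ?_⟩
  rw [tendsto_zero_iff_norm_tendsto_zero] at h01 ⊢
  simpa only [norm_apply_one_zero_eq_of_mem_unitaryGroup (reichardt_mem_unitaryGroup θ hU' _)]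
    using h01
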